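/- The class of languages accepted by quasi-deterministic all-final 1-limited (qDF1) sensing 5'→3' WK automata properly includes the class of languages accepted by quasi-deterministic stateless 1-limited (qDN1) sensing 5'→3' WK automata: every qDN1 automaton is a qDF1 automaton, and the language ba* + a* = { baⁿ : n ≥ 0 } ∪ { aⁿ : n ≥ 0 } is accepted by a qDF1 sensing 5'→3' WK automaton but by no quasi-deterministic stateless sensing 5'→3' WK automaton. -/

import Mathlib

open Computability

/-- The two-letter alphabet `{a, b}`. -/
inductive Letter : Type
  | a : Letter
  | b : Letter
deriving DecidableEq

instance instFintypeLetter : Fintype Letter :=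
  ⟨{Letter.a, Letter.b}, fun x => by cases x <;> simp⟩

open Letter

/-- A sensing 5'→3' Watson-Crick automaton over the alphabet `T` with state set `Q`:
an initial state `q0`, a set `F` of final states, and a transition mapping
`δ : Q × T* × T* → 2^Q` that is nonempty for only finitely many triples. -/
structure WKAutomaton (T : Type) (Q : Type) where
  q0 : Q
  F : Set Q
  δ : Q → List T → List T → Set Q
  finite_delta : {t : Q × List T × List T | (δ t.1 t.2.1 t.2.2).Nonempty}.Finite

namespace WKAutomaton

variable {T Q : Type}

/-- One computation step on configurations:
`(q, x ++ w' ++ y) ⇒ (q', w')` iff `q' ∈ δ q x y`. -/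
def Step (A : WKAutomaton T Q) (c c' : Q × List T) : Prop :=
  ∃ x y : List T, c.2 = x ++ c'.2 ++ y ∧ c'.1 ∈ A.δ c.1 x y

/-- The accepted language: words `w` with `(q₀, w) ⇒* (q_F, λ)` for some final `q_F`. -/
def Lang (A : WKAutomaton T Q) : Set (List T) :=
  {w | ∃ qf ∈ A.F, Relation.ReflTransGen A.Step (A.q0, w) (qf, [])}

/-- `A` is deterministic: in every configuration at most one computation step
(choice of `x`, `y`, `w'`, `q'`) is applicable. -/
def Deterministic (A : WKAutomaton T Q) : Prop :=
  ∀ (q : Q) (w x₁ y₁ w₁ x₂ y₂ w₂ : List T) (q₁ q₂ : Q),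
    w = x₁ ++ w₁ ++ y₁ → q₁ ∈ A.δ q x₁ y₁ →
    w = x₂ ++ w₂ ++ y₂ → q₂ ∈ A.δ q x₂ y₂ →
    x₁ = x₂ ∧ y₁ = y₂ ∧ w₁ = w₂ ∧ q₁ = q₂

/-- `A` is quasi-deterministic: for every configuration `(q,w)`, whenever
`(q,w) ⇒ (p,u)` and `(q,w) ⇒ (r,v)`, it holds that `p = r`. -/
def QuasiDet (A : WKAutomaton T Q) : Prop :=
  ∀ (q : Q) (w : List T) (p r : Q) (u v : List T),
    A.Step (q, w) (p, u) → A.Step (q, w) (r, v) → p = r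

/-- `A` is state-deterministic: for every state `q` there is at most one state `p`
with `p ∈ δ(q,u,v)` for some words `u`, `v`. -/
def StateDet (A : WKAutomaton T Q) : Prop :=
  ∀ (q p₁ p₂ : Q) (u₁ v₁ u₂ v₂ : List T),
    p₁ ∈ A.δ q u₁ v₁ → p₂ ∈ A.δ q u₂ v₂ → p₁ = p₂

/-- `A` is stateless: `Q = F = {q₀}`. -/
def Stateless (A : WKAutomaton T Q) : Prop :=
  (∀ q : Q, q = A.q0) ∧ A.F = {A.q0}

/-- `A` is all-final: `Q = F`. -/
def AllFinal (A : WKAutomaton T Q) : Prop := A.F = Set.univ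

/-- `A` is simple: at most one head reads in each step. -/
def Simple (A : WKAutomaton T Q) : Prop :=
  ∀ (q : Q) (u v : List T), (A.δ q u v).Nonempty → u = [] ∨ v = []

/-- `A` is 1-limited: exactly one letter is read in each step. -/
def OneLimited (A : WKAutomaton T Q) : Prop :=
  ∀ (q : Q) (u v : List T), (A.δ q u v).Nonempty →
    (u = [] ∧ v.length = 1) ∨ (u.length = 1 ∧ v = [])

end WKAutomaton

/-- Equality of languages modulo the empty word. -/
def EqModLambda {T : Type} (L₁ L₂ : Set (List T)) : Prop :=
  ∀ w : List T, w ≠ [] → (w ∈ L₁ ↔ w ∈ L₂)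

/-- `L` is accepted (modulo the empty word) by some sensing 5'→3' WK automaton
with a finite state set satisfying the property `P`. -/
def AcceptsWith (T : Type) (P : ∀ Q : Type, WKAutomaton T Q → Prop)
    (L : Set (List T)) : Prop :=
  ∃ (Q : Type) (_ : Finite Q) (A : WKAutomaton T Q), P Q A ∧ EqModLambda A.Lang L

/-- The language `ba* + a*`. -/
def Lba : Set (List Letter) :=
  {w | (∃ n : ℕ, w = b :: List.replicate n a) ∨ (∃ n : ℕ, w = List.replicate n a)}


/-!
A stateless automaton can fire any of its transitions in any configuration. Accepting the
word `b` needs a transition that reads `b` with one head, so it accepts `b·b` (left head) or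
`a·b` (right head, after the transitions accepting `a`); neither lies in `ba* + a*`.
With two states, both final, the language is accepted by reading one letter `a` or `b` in
the start state and only `a`'s afterwards.
-/

open Letter

namespace WKAutomaton

variable {T Q : Type} {A : WKAutomaton T Q}

theorem Stateless.allFinal (h : A.Stateless) : A.AllFinal := by
  rw [AllFinal, h.2, Set.eq_univ_iff_forall]
  exact fun q => h.1 q

theorem Stateless.append_mem_lang (h : A.Stateless) {q : Q} {x y u : List T}
    (hδ : (A.δ q x y).Nonempty) (hu : u ∈ A.Lang) : x ++ u ++ y ∈ A.Lang := by
  obtain ⟨qf, hqf, hu⟩ := hu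
  obtain ⟨p, hp⟩ := hδ
  rw [h.1 p, h.1 q] at hp
  exact ⟨qf, hqf, .head ⟨x, y, rfl, hp⟩ hu⟩

theorem exists_delta_singleton_of_reflTransGen {q qf : Q} {t : T}
    (h : Relation.ReflTransGen A.Step (q, [t]) (qf, [])) :
    ∃ p, (A.δ p [t] []).Nonempty ∨ (A.δ p [] [t]).Nonempty := by
  generalize hc : (q, [t]) = c at h
  induction h using Relation.ReflTransGen.head_induction_on generalizing q with
  | refl => simp at hc
  | head hstep _ ih =>
    subst hc
    obtain ⟨x, y, hw, hp⟩ := hstep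
    rcases List.append_eq_singleton_iff.mp hw.symm with ⟨hxu, rfl⟩ | ⟨hxu, rfl⟩
    · obtain ⟨rfl, -⟩ := List.append_eq_nil_iff.mp hxu
      exact ⟨_, .inr ⟨_, hp⟩⟩
    · rcases List.append_eq_singleton_iff.mp hxu with ⟨rfl, hu⟩ | ⟨rfl, -⟩
      · exact ih (Prod.ext rfl hu.symm)
      · exact ⟨_, .inl ⟨_, hp⟩⟩

end WKAutomaton

theorem AcceptsWith.mono {T : Type} {P P' : ∀ Q : Type, WKAutomaton T Q → Prop}
    {L : Set (List T)} (hP : ∀ Q A, P Q A → P' Q A) (h : AcceptsWith T P L) :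
    AcceptsWith T P' L :=
  let ⟨Q, hQ, A, hA, hL⟩ := h
  ⟨Q, hQ, A, hP Q A hA, hL⟩

theorem replicate_mem_Lba (n : ℕ) : List.replicate n a ∈ Lba := .inr ⟨n, rfl⟩

theorem cons_b_replicate_mem_Lba (n : ℕ) : b :: List.replicate n a ∈ Lba := .inl ⟨n, rfl⟩

theorem bb_notMem_Lba : [b, b] ∉ Lba := by
  simp [Lba, List.eq_replicate_iff]

theorem ab_notMem_Lba : [a, b] ∉ Lba := by
  simp [Lba, List.eq_replicate_iff]

theorem not_acceptsWith_stateless_Lba : ¬ AcceptsWith Letter (fun _ A => A.Stateless) Lba := by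
  rintro ⟨Q, -, A, hA, hL⟩
  have hmem {w : List Letter} (hw : w ≠ []) : w ∈ A.Lang ↔ w ∈ Lba := hL w hw
  have hb : [b] ∈ A.Lang := (hmem (by simp)).2 (cons_b_replicate_mem_Lba 0)
  have ha : [a] ∈ A.Lang := (hmem (by simp)).2 (replicate_mem_Lba 1)
  have ⟨_, _, hrun⟩ := hb
  obtain ⟨p, hleft | hright⟩ := WKAutomaton.exists_delta_singleton_of_reflTransGen hrun
  · exact bb_notMem_Lba <| (hmem (by simp)).1 (hA.append_mem_lang hleft hb)
  · exact ab_notMem_Lba <| (hmem (by simp)).1 (hA.append_mem_lang hright ha)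

inductive LbaState : Type
  | start
  | reading
deriving DecidableEq

instance : Fintype LbaState := ⟨{.start, .reading}, fun q => by cases q <;> simp⟩

namespace LbaState

def delta (p : LbaState) (x y : List Letter) : Set LbaState :=
  {q | q = reading ∧ y = [] ∧ (x = [a] ∨ p = start ∧ x = [b])}

theorem delta_finite :
    {t : LbaState × List Letter × List Letter | (delta t.1 t.2.1 t.2.2).Nonempty}.Finite := by
  refine (Set.finite_univ.prod ((Set.toFinite {[a], [b]}).prod (Set.finite_singleton []))).subset ?_
  rintro ⟨p, x, y⟩ ⟨q, -, rfl, hx⟩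
  rcases hx with rfl | ⟨-, rfl⟩ <;> simp

def acceptor : WKAutomaton Letter LbaState where
  q0 := start
  F := Set.univ
  δ := delta
  finite_delta := delta_finite

theorem acceptor_step_iff {p q : LbaState} {w u : List Letter} :
    acceptor.Step (p, w) (q, u) ↔ q = reading ∧ (w = a :: u ∨ p = start ∧ w = b :: u) := by
  simp only [WKAutomaton.Step, acceptor, delta, Set.mem_ofPred_eq]
  constructor
  · rintro ⟨x, y, rfl, rfl, rfl, rfl | ⟨rfl, rfl⟩⟩ <;> simp
  · rintro ⟨rfl, rfl | ⟨rfl, rfl⟩⟩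
    · exact ⟨[a], [], by simp, rfl, rfl, .inl rfl⟩
    · exact ⟨[b], [], by simp, rfl, rfl, .inr ⟨rfl, rfl⟩⟩

theorem reflTransGen_replicate (p : LbaState) (n : ℕ) :
    ∃ q, Relation.ReflTransGen acceptor.Step (p, List.replicate n a) (q, []) := by
  induction n generalizing p with
  | zero => exact ⟨p, .refl⟩
  | succ n ih =>
    obtain ⟨q, hq⟩ := ih reading
    exact ⟨q, .head (acceptor_step_iff.2 ⟨rfl, .inl rfl⟩) hq⟩

theorem mem_Lba_of_reflTransGen {p q : LbaState} {w : List Letter}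
    (h : Relation.ReflTransGen acceptor.Step (p, w) (q, [])) :
    w ∈ Lba ∧ (p = reading → ∃ n, w = List.replicate n a) := by
  generalize hc : (p, w) = c at h
  induction h using Relation.ReflTransGen.head_induction_on generalizing p w with
  | refl => cases hc; exact ⟨replicate_mem_Lba 0, fun _ => ⟨0, rfl⟩⟩
  | @head c c' hstep _ ih =>
    subst hc
    obtain ⟨q', u⟩ := c'
    obtain ⟨rfl, hw⟩ := acceptor_step_iff.1 hstep
    obtain ⟨n, rfl⟩ := (ih rfl).2 rfl
    rcases hw with rfl | ⟨rfl, rfl⟩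
    · exact ⟨replicate_mem_Lba (n + 1), fun _ => ⟨n + 1, rfl⟩⟩
    · exact ⟨cons_b_replicate_mem_Lba n, nofun⟩

theorem acceptor_lang : acceptor.Lang = Lba := by
  ext w
  constructor
  · rintro ⟨q, -, h⟩
    exact (mem_Lba_of_reflTransGen h).1
  · rintro (⟨n, rfl⟩ | ⟨n, rfl⟩)
    · obtain ⟨q, hq⟩ := reflTransGen_replicate reading n
      exact ⟨q, trivial, .head (acceptor_step_iff.2 ⟨rfl, .inr ⟨rfl, rfl⟩⟩) hq⟩
    · obtain ⟨q, hq⟩ := reflTransGen_replicate start n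
      exact ⟨q, trivial, hq⟩

theorem acceptor_quasiDet : acceptor.QuasiDet := by
  intro q w p r u v hp hr
  rw [(acceptor_step_iff.1 hp).1, (acceptor_step_iff.1 hr).1]

theorem acceptor_oneLimited : acceptor.OneLimited := by
  rintro p x y ⟨q, -, rfl, rfl | ⟨-, rfl⟩⟩ <;> simp

end LbaState

/-- The class of languages accepted by quasi-deterministic all-final 1-limited
(qDF1) sensing 5'→3' WK automata properly includes the class of languages
accepted by quasi-deterministic stateless 1-limited (qDN1) sensing 5'→3' WK
automata: every stateless automaton is all-final (so every qDN1 automaton is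
a qDF1 automaton), and `ba* + a*` is accepted by a qDF1 sensing 5'→3' WK
automaton but by no quasi-deterministic stateless sensing 5'→3' WK automaton. -/
theorem qDN1_proper_subset_qDF1 :
    (∀ (T Q : Type) (A : WKAutomaton T Q), A.Stateless → A.AllFinal) ∧
    (∀ (T : Type) (L : Set (List T)),
      AcceptsWith T (fun _ A => A.QuasiDet ∧ A.Stateless ∧ A.OneLimited) L →
      AcceptsWith T (fun _ A => A.QuasiDet ∧ A.AllFinal ∧ A.OneLimited) L) ∧
    AcceptsWith Letter (fun _ A => A.QuasiDet ∧ A.AllFinal ∧ A.OneLimited) Lba ∧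
    ¬ AcceptsWith Letter (fun _ A => A.QuasiDet ∧ A.Stateless) Lba := by
  refine ⟨fun _ _ _ h => h.allFinal, fun _ _ => ?_, ?_, ?_⟩
  · exact AcceptsWith.mono fun _ _ ⟨hq, hs, h1⟩ => ⟨hq, hs.allFinal, h1⟩
  · exact ⟨LbaState, inferInstance, LbaState.acceptor,
      ⟨LbaState.acceptor_quasiDet, rfl, LbaState.acceptor_oneLimited⟩,
      fun w _ => by rw [LbaState.acceptor_lang]⟩
  · exact fun h => not_acceptsWith_stateless_Lba (h.mono fun _ _ h => h.2)
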